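/- arXiv:2010.05752 — 5 statements merged into one kernel-verified Lean document; each statement's English description precedes it below -/
import Mathlib

section
/- Fast finite-time stability (Lemma 1, scalar Lyapunov form): Let c1 > 0, c2 > 0 and p ∈ (0,1). Suppose V : [0,∞) → ℝ is differentiable with V(t) ≥ 0 for all t ≥ 0 and satisfies V'(t) ≤ −c1·V(t)^p − c2·V(t) for all t ≥ 0. Then V(t) = 0 for all t ≥ T, where T = ln(1 + c2·V(0)^{1−p}/c1) / (c2·(1−p)). -/
/-- **Fast finite-time stability (Lemma 1, scalar Lyapunov form).**
If `V ≥ 0` is differentiable on `[0,∞)` and satisfies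
`V' ≤ -c1 * V ^ p - c2 * V` with `c1, c2 > 0` and `p ∈ (0,1)`, then `V`
vanishes for all `t ≥ T` where
`T = log (1 + c2 * V 0 ^ (1 - p) / c1) / (c2 * (1 - p))`. -/
theorem fast_finite_time_stability
    (c1 c2 p : ℝ) (hc1 : 0 < c1) (hc2 : 0 < c2) (hp : p ∈ Set.Ioo (0 : ℝ) 1)
    (V V' : ℝ → ℝ)
    (hderiv : ∀ t ≥ (0 : ℝ), HasDerivAt V (V' t) t)
    (hnonneg : ∀ t ≥ (0 : ℝ), 0 ≤ V t)
    (hineq : ∀ t ≥ (0 : ℝ), V' t ≤ -c1 * V t ^ p - c2 * V t) :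
    ∀ t ≥ Real.log (1 + c2 * V 0 ^ (1 - p) / c1) / (c2 * (1 - p)), V t = 0 := by
  obtain ⟨hp0, hp1⟩ := hp
  set T : ℝ := Real.log (1 + c2 * V 0 ^ (1 - p) / c1) / (c2 * (1 - p)) with hT
  have h1p : 0 < 1 - p := by linarith
  have hW0 : 0 ≤ V 0 ^ (1 - p) := Real.rpow_nonneg (hnonneg 0 le_rfl) _
  have harg : (1 : ℝ) ≤ 1 + c2 * V 0 ^ (1 - p) / c1 := by
    have : 0 ≤ c2 * V 0 ^ (1 - p) / c1 := by positivity
    linarith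
  have hT0 : 0 ≤ T := by
    apply div_nonneg (Real.log_nonneg harg) (by positivity)
  -- V is antitone on [0, ∞)
  have hVanti : AntitoneOn V (Set.Ici 0) := by
    apply antitoneOn_of_hasDerivWithinAt_nonpos (convex_Ici 0) (f' := V')
    · intro x hx
      exact ((hderiv x hx).continuousAt).continuousWithinAt
    · intro x hx
      exact ((hderiv x (le_of_lt (by simpa using hx))).hasDerivWithinAt)
    · intro x hx
      have hx' : (0:ℝ) ≤ x := le_of_lt (by simpa using hx)
      have := hineq x hx'
      have h1 : 0 ≤ V x ^ p := Real.rpow_nonneg (hnonneg x hx') _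
      have h2 : 0 ≤ V x := hnonneg x hx'
      nlinarith
  -- Key: V T = 0
  have hVT : V T = 0 := by
    by_contra hne
    have hVTpos : 0 < V T := lt_of_le_of_ne (hnonneg T hT0) (Ne.symm hne)
    -- on [0,T], V ≥ V T > 0
    have hVpos : ∀ x ∈ Set.Icc (0:ℝ) T, 0 < V x := fun x hx =>
      lt_of_lt_of_le hVTpos (hVanti hx.1 hT0 hx.2)
    -- define G
    set G : ℝ → ℝ := fun t => Real.exp (c2 * (1 - p) * t) * (V t ^ (1 - p) + c1 / c2) with hG
    have hGanti : AntitoneOn G (Set.Icc 0 T) := by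
      apply antitoneOn_of_hasDerivWithinAt_nonpos (convex_Icc 0 T)
        (f' := fun t => c2 * (1 - p) * Real.exp (c2 * (1 - p) * t) * (V t ^ (1 - p) + c1 / c2)
          + Real.exp (c2 * (1 - p) * t) * ((1 - p) * V t ^ (1 - p - 1) * V' t))
      · intro x hx
        have hV : ContinuousOn V (Set.Icc 0 T) := fun y hy =>
          ((hderiv y hy.1).continuousAt).continuousWithinAt
        have : ContinuousOn G (Set.Icc 0 T) := by
          apply ContinuousOn.mul
          · exact (Real.continuous_exp.comp (continuous_const.mul continuous_id)).continuousOn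
          · exact (hV.rpow_const (fun y hy => Or.inr h1p.le)).add continuousOn_const
        exact this x hx
      · intro x hx
        rw [interior_Icc] at hx
        have hx' : x ∈ Set.Icc (0:ℝ) T := ⟨hx.1.le, hx.2.le⟩
        have hd : HasDerivAt G (Real.exp (c2*(1-p)*(id x)) * (c2*(1-p)*1) * (V x ^ (1-p) + c1/c2)
            + Real.exp (c2*(1-p)*(id x)) * (V' x * (1 - p) * V x ^ (1 - p - 1))) x :=
          (((hasDerivAt_id x).const_mul (c2*(1-p))).exp.mul
            (((hderiv x hx'.1).rpow_const (Or.inl (hVpos x hx').ne')).add_const (c1/c2)))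
        have hd' : HasDerivAt G (c2 * (1 - p) * Real.exp (c2 * (1 - p) * x) * (V x ^ (1 - p) + c1 / c2)
            + Real.exp (c2 * (1 - p) * x) * ((1 - p) * V x ^ (1 - p - 1) * V' x)) x := by
          convert hd using 1; simp only [id]; ring
        exact hd'.hasDerivWithinAt
      · intro x hx
        rw [interior_Icc] at hx
        have hx' : x ∈ Set.Icc (0:ℝ) T := ⟨hx.1.le, hx.2.le⟩
        have hVx : 0 < V x := hVpos x hx'
        have hE : 0 < Real.exp (c2 * (1 - p) * x) := Real.exp_pos _
        set E := Real.exp (c2 * (1 - p) * x)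
        have hineqx := hineq x hx'.1
        have key1 : V x ^ (1 - p - 1) * V x ^ p = 1 := by
          rw [← Real.rpow_add hVx]
          norm_num
        have key2 : V x ^ (1 - p - 1) * V x = V x ^ (1 - p) := by
          nth_rewrite 2 [← Real.rpow_one (V x)]
          rw [← Real.rpow_add hVx]
          ring_nf
        have hpw : 0 < V x ^ (1 - p - 1) := Real.rpow_pos_of_pos hVx _
        have hmul : (1 - p) * V x ^ (1 - p - 1) * V' x
            ≤ (1 - p) * V x ^ (1 - p - 1) * (-c1 * V x ^ p - c2 * V x) := by
          apply mul_le_mul_of_nonneg_left hineqx (by positivity)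
        have hrhs : (1 - p) * V x ^ (1 - p - 1) * (-c1 * V x ^ p - c2 * V x)
            = -(1 - p) * c1 - (1 - p) * c2 * V x ^ (1 - p) := by
          have : (1 - p) * V x ^ (1 - p - 1) * (-c1 * V x ^ p - c2 * V x)
              = (1 - p) * (-c1 * (V x ^ (1 - p - 1) * V x ^ p)
                - c2 * (V x ^ (1 - p - 1) * V x)) := by ring
          rw [this, key1, key2]; ring
        have hcc : c2 * (c1 / c2) = c1 := by field_simp
        have hE' : E * ((1 - p) * V x ^ (1 - p - 1) * V' x)
            ≤ E * (-(1 - p) * c1 - (1 - p) * c2 * V x ^ (1 - p)) := by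
          rw [← hrhs]
          exact mul_le_mul_of_nonneg_left hmul hE.le
        have e1 : c2 * (1 - p) * E * (V x ^ (1 - p) + c1 / c2)
            = (1 - p) * c2 * (E * V x ^ (1 - p)) + (1 - p) * c1 * E := by
          have h : c2 * (1 - p) * E * (c1 / c2) = (1 - p) * E * (c2 * (c1 / c2)) := by ring
          rw [mul_add, h, hcc]; ring
        have e2 : E * (-(1 - p) * c1 - (1 - p) * c2 * V x ^ (1 - p))
            = -((1 - p) * c1 * E) - (1 - p) * c2 * (E * V x ^ (1 - p)) := by ring
        linarith [hE', e1, e2]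
    -- contradiction
    have hle : G T ≤ G 0 := hGanti (Set.left_mem_Icc.2 hT0) (Set.right_mem_Icc.2 hT0) hT0
    have hG0 : G 0 = V 0 ^ (1 - p) + c1 / c2 := by simp [hG]
    have hexpT : Real.exp (c2 * (1 - p) * T) = 1 + c2 * V 0 ^ (1 - p) / c1 := by
      rw [hT]
      rw [mul_div_cancel₀ _ (by positivity : (c2 * (1 - p)) ≠ 0)]
      exact Real.exp_log (by linarith)
    have hWT : 0 < V T ^ (1 - p) := Real.rpow_pos_of_pos hVTpos _
    have hGT : G T = (1 + c2 * V 0 ^ (1 - p) / c1) * (V T ^ (1 - p) + c1 / c2) := by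
      rw [hG]; dsimp only; rw [hexpT]
    have hlt : V 0 ^ (1 - p) + c1 / c2 < G T := by
      rw [hGT]
      have h1 : (1 + c2 * V 0 ^ (1 - p) / c1) * (c1 / c2) = c1 / c2 + V 0 ^ (1 - p) := by
        field_simp
      nlinarith [mul_pos (by positivity : (0:ℝ) < 1 + c2 * V 0 ^ (1 - p) / c1) hWT]
    rw [hG0] at hle
    linarith
  intro t ht
  have h1 : V t ≤ V T := hVanti (Set.mem_Ici.2 hT0) (Set.mem_Ici.2 (hT0.trans ht)) ht
  have h2 : 0 ≤ V t := hnonneg t (hT0.trans ht)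
  linarith [hVT ▸ h1]
end

section
/- Fast finite-time uniform ultimate boundedness (Lemma 2, scalar Lyapunov form): Let c1 > 0, c2 > 0, c3 > 0, p1 ∈ (0,1), p2 ∈ (0,p1), and let θ1 ∈ (0,c1), θ2 ∈ (0,c2). Suppose V : [0,∞) → ℝ is differentiable with V(t) ≥ 0 for all t ≥ 0 and satisfies V'(t) ≤ −c1·V(t)^{p1} − c2·V(t) + c3·V(t)^{p2} for all t ≥ 0. Then for all t ≥ T, where T = ln(1 + (c2−θ2)·V(0)^{1−p1}/(c1−θ1)) / ((c2−θ2)·(1−p1)), the value V(t) lies in the residual set, i.e. θ1·V(t)^{p1−p2} + θ2·V(t)^{1−p2} ≤ c3. -/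
lemma barrier_aux (V V' : ℝ → ℝ) (M : ℝ)
    (hd : ∀ r ≥ (0:ℝ), HasDerivAt V (V' r) r)
    (hneg : ∀ r ≥ (0:ℝ), V r = M → V' r < 0)
    {s t : ℝ} (hs : 0 ≤ s) (hst : s ≤ t) (hVs : V s ≤ M) : V t ≤ M := by
  by_contra hVt
  push_neg at hVt
  set S : Set ℝ := {r | r ∈ Set.Icc s t ∧ V r ≤ M} with hSdef
  have hSne : S.Nonempty := ⟨s, ⟨le_refl s, hst⟩, hVs⟩
  have hSbdd : BddAbove S := ⟨t, fun r hr => hr.1.2⟩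
  set u := sSup S with hu
  have huS : u ∈ closure S := csSup_mem_closure hSne hSbdd
  have huIcc : u ∈ Set.Icc s t :=
    isClosed_Icc.closure_subset ((closure_mono (fun r hr => hr.1)) huS)
  have hu0 : 0 ≤ u := hs.trans huIcc.1
  have hVuM : V u ≤ M := by
    have hne : (nhdsWithin u S).NeBot := mem_closure_iff_nhdsWithin_neBot.mp huS
    exact le_of_tendsto ((hd u hu0).continuousAt.continuousWithinAt)
      (eventually_nhdsWithin_of_forall (fun r (hr : r ∈ S) => hr.2))
  have hut : u < t := by
    rcases lt_or_eq_of_le huIcc.2 with h | h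
    · exact h
    · exact absurd (h ▸ hVuM) (not_le.mpr hVt)
  have hgt : ∀ r, u < r → r ≤ t → M < V r := by
    intro r hur hrt
    by_contra h
    push_neg at h
    exact absurd (le_csSup hSbdd ⟨⟨huIcc.1.trans hur.le, hrt⟩, h⟩) (not_le.mpr hur)
  have hVuM' : M ≤ V u := by
    refine ge_of_tendsto ((hd u hu0).continuousAt.continuousWithinAt :
      Filter.Tendsto V (nhdsWithin u (Set.Ioi u)) (nhds (V u))) ?_
    filter_upwards [Ioc_mem_nhdsGT_of_mem ⟨le_refl u, hut⟩] with r hr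
    exact (hgt r hr.1 hr.2).le
  have hVu : V u = M := le_antisymm hVuM hVuM'
  have hneg' : V' u < 0 := hneg u hu0 hVu
  have hslope : 0 ≤ V' u := by
    have h1 := hasDerivAt_iff_tendsto_slope.mp (hd u hu0)
    have h2 : Filter.Tendsto (slope V u) (nhdsWithin u (Set.Ioi u)) (nhds (V' u)) :=
      h1.mono_left (nhdsWithin_mono u (fun r hr => ne_of_gt hr))
    refine ge_of_tendsto h2 ?_
    filter_upwards [Ioc_mem_nhdsGT_of_mem ⟨le_refl u, hut⟩] with r hr
    have h3 : 0 < V r - V u := by rw [hVu]; linarith [hgt r hr.1 hr.2]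
    have h4 : 0 < r - u := sub_pos.mpr hr.1
    rw [slope_def_field]
    exact le_of_lt (div_pos h3 h4)
  linarith

/-- **Fast finite-time uniform ultimate boundedness (Lemma 2, scalar Lyapunov form).**
If `V ≥ 0` is differentiable on `[0,∞)` and satisfies
`V' ≤ -c1 * V ^ p1 - c2 * V + c3 * V ^ p2` with `c1, c2, c3 > 0`,
`p1 ∈ (0,1)`, `p2 ∈ (0,p1)`, then for any `θ1 ∈ (0,c1)`, `θ2 ∈ (0,c2)`,
`V t` lies in the residual set `θ1 * v ^ (p1 - p2) + θ2 * v ^ (1 - p2) ≤ c3`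
for all `t ≥ T`, where
`T = log (1 + (c2 - θ2) * V 0 ^ (1 - p1) / (c1 - θ1)) / ((c2 - θ2) * (1 - p1))`. -/
theorem fast_finite_time_uniform_ultimate_boundedness
    (c1 c2 c3 p1 p2 θ1 θ2 : ℝ) (hc1 : 0 < c1) (hc2 : 0 < c2) (hc3 : 0 < c3)
    (hp1 : p1 ∈ Set.Ioo (0 : ℝ) 1) (hp2 : p2 ∈ Set.Ioo (0 : ℝ) p1)
    (hθ1 : θ1 ∈ Set.Ioo (0 : ℝ) c1) (hθ2 : θ2 ∈ Set.Ioo (0 : ℝ) c2)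
    (V V' : ℝ → ℝ)
    (hderiv : ∀ t ≥ (0 : ℝ), HasDerivAt V (V' t) t)
    (hnonneg : ∀ t ≥ (0 : ℝ), 0 ≤ V t)
    (hineq : ∀ t ≥ (0 : ℝ), V' t ≤ -c1 * V t ^ p1 - c2 * V t + c3 * V t ^ p2) :
    ∀ t ≥ Real.log (1 + (c2 - θ2) * V 0 ^ (1 - p1) / (c1 - θ1)) / ((c2 - θ2) * (1 - p1)),
      θ1 * V t ^ (p1 - p2) + θ2 * V t ^ (1 - p2) ≤ c3 := by
  obtain ⟨hp1pos, hp1lt⟩ := hp1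
  obtain ⟨hp2pos, hp2lt⟩ := hp2
  obtain ⟨hθ1pos, hθ1lt⟩ := hθ1
  obtain ⟨hθ2pos, hθ2lt⟩ := hθ2
  set a : ℝ := c1 - θ1 with ha
  set b : ℝ := c2 - θ2 with hb
  set q : ℝ := 1 - p1 with hq
  have hapos : 0 < a := sub_pos.mpr hθ1lt
  have hbpos : 0 < b := sub_pos.mpr hθ2lt
  have hqpos : 0 < q := sub_pos.mpr hp1lt
  have hqp1 : (0:ℝ) < p1 - p2 := sub_pos.mpr hp2lt
  have hqp2 : (0:ℝ) < 1 - p2 := by linarith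
  set f : ℝ → ℝ := fun v => θ1 * v ^ (p1 - p2) + θ2 * v ^ (1 - p2) with hf
  -- monotonicity of f on [0, ∞)
  have hmono : ∀ u v : ℝ, 0 ≤ u → u ≤ v → f u ≤ f v := by
    intro u v hu huv
    exact add_le_add
      (mul_le_mul_of_nonneg_left (Real.rpow_le_rpow hu huv hqp1.le) hθ1pos.le)
      (mul_le_mul_of_nonneg_left (Real.rpow_le_rpow hu huv hqp2.le) hθ2pos.le)
  -- f 0 = 0
  have hf0 : f 0 = 0 := by
    simp [hf, Real.zero_rpow (ne_of_gt hqp1), Real.zero_rpow (ne_of_gt hqp2)]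
  -- big M with f M ≥ c3
  set M0 : ℝ := max 1 ((c3 / θ2) ^ ((1:ℝ) / (1 - p2))) with hM0
  have hM0nonneg : (0:ℝ) ≤ M0 := le_trans zero_le_one (le_max_left _ _)
  have hfM0 : c3 ≤ f M0 := by
    have hbase : (0:ℝ) ≤ (c3 / θ2) ^ ((1:ℝ) / (1 - p2)) :=
      Real.rpow_nonneg (by positivity) _
    have h1 : (c3 / θ2) ≤ M0 ^ (1 - p2) := by
      calc c3 / θ2 = ((c3 / θ2) ^ ((1:ℝ) / (1 - p2))) ^ (1 - p2) := by
            rw [← Real.rpow_mul (by positivity), one_div_mul_cancel (ne_of_gt hqp2),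
              Real.rpow_one]
        _ ≤ M0 ^ (1 - p2) := Real.rpow_le_rpow hbase (le_max_right _ _) hqp2.le
    have h2 : c3 ≤ θ2 * M0 ^ (1 - p2) := by
      rw [← div_le_iff₀' hθ2pos]
      exact h1
    have h3 : 0 ≤ θ1 * M0 ^ (p1 - p2) := by positivity
    simp only [hf]
    linarith
  -- existence of v* via IVT
  have hfcont : ContinuousOn f (Set.Icc 0 M0) := by
    intro v hv
    exact ((((Real.continuousAt_rpow_const v (p1 - p2) (Or.inr hqp1.le)).const_smul θ1).add
      ((Real.continuousAt_rpow_const v (1 - p2) (Or.inr hqp2.le)).const_smul θ2)).continuousWithinAt)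
  obtain ⟨v, hvmem, hfv⟩ : ∃ v ∈ Set.Icc (0:ℝ) M0, f v = c3 := by
    have := intermediate_value_Icc hM0nonneg hfcont
    have h : c3 ∈ Set.Icc (f 0) (f M0) := ⟨by rw [hf0]; exact hc3.le, hfM0⟩
    obtain ⟨v, hv, hfv⟩ := this h
    exact ⟨v, hv, hfv⟩
  have hvpos : 0 < v := by
    rcases lt_or_eq_of_le hvmem.1 with h | h
    · exact h
    · exfalso; rw [← h, hf0] at hfv; exact absurd hfv.symm (ne_of_gt hc3)
  -- key derivative bound above v*
  have hkey : ∀ r ≥ (0:ℝ), v ≤ V r → V' r ≤ -a * V r ^ p1 - b * V r := by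
    intro r hr hvr
    have hVr : 0 < V r := lt_of_lt_of_le hvpos hvr
    have h1 : c3 ≤ θ1 * V r ^ (p1 - p2) + θ2 * V r ^ (1 - p2) := by
      rw [← hfv]; exact hmono v (V r) hvpos.le hvr
    have h2 : c3 * V r ^ p2 ≤ θ1 * V r ^ p1 + θ2 * V r := by
      have h3 := mul_le_mul_of_nonneg_right h1 (Real.rpow_nonneg hVr.le p2)
      calc c3 * V r ^ p2 ≤ (θ1 * V r ^ (p1 - p2) + θ2 * V r ^ (1 - p2)) * V r ^ p2 := h3
        _ = θ1 * V r ^ p1 + θ2 * V r := by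
            rw [add_mul, mul_assoc, mul_assoc, ← Real.rpow_add hVr, ← Real.rpow_add hVr]
            norm_num
    have h4 := hineq r hr
    simp only [ha, hb]
    linarith
  have hneg : ∀ r ≥ (0:ℝ), V r = v → V' r < 0 := by
    intro r hr hvr
    have h1 : V' r ≤ -a * V r ^ p1 - b * V r := hkey r hr (le_of_eq hvr.symm)
    have h2 : 0 < V r ^ p1 := Real.rpow_pos_of_pos (hvr ▸ hvpos) p1
    have h3 : 0 < V r := hvr ▸ hvpos
    nlinarith
  -- finite time reaching
  set y0 : ℝ := V 0 ^ q with hy0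
  have hy0nonneg : 0 ≤ y0 := Real.rpow_nonneg (hnonneg 0 le_rfl) q
  set T : ℝ := Real.log (1 + b * y0 / a) / (b * q) with hT
  have hargpos : (0:ℝ) < 1 + b * y0 / a := by positivity
  have harg1 : (1:ℝ) ≤ 1 + b * y0 / a := by
    have : 0 ≤ b * y0 / a := by positivity
    linarith
  have hT0 : 0 ≤ T := div_nonneg (Real.log_nonneg harg1) (by positivity)
  have hreach : ∃ s ∈ Set.Icc (0:ℝ) T, V s ≤ v := by
    by_contra hcon
    push_neg at hcon
    have hVgt : ∀ s ∈ Set.Icc (0:ℝ) T, v < V s := hcon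
    have hVpos : ∀ s ∈ Set.Icc (0:ℝ) T, 0 < V s := fun s hs => hvpos.trans (hVgt s hs)
    set y : ℝ → ℝ := fun r => V r ^ q with hy
    set z : ℝ → ℝ := fun r => Real.exp (b * q * r) * (y r + a / b) with hz
    have hzderiv : ∀ s ∈ Set.Icc (0:ℝ) T,
        HasDerivAt z (Real.exp (b * q * s) * (b * q) * (y s + a / b)
          + Real.exp (b * q * s) * (V' s * q * V s ^ (q - 1))) s := by
      intro s hs
      have hlin : HasDerivAt (fun r : ℝ => b * q * r) (b * q) s := by
        simpa using (hasDerivAt_id s).const_mul (b * q)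
      have hexp : HasDerivAt (fun r : ℝ => Real.exp (b * q * r))
          (Real.exp (b * q * s) * (b * q)) s := hlin.exp
      have hyd : HasDerivAt y (V' s * q * V s ^ (q - 1)) s :=
        (hderiv s hs.1).rpow_const (Or.inl (ne_of_gt (hVpos s hs)))
      exact hexp.mul (hyd.add_const (a / b))
    have hzle : ∀ s ∈ Set.Icc (0:ℝ) T,
        Real.exp (b * q * s) * (b * q) * (y s + a / b)
          + Real.exp (b * q * s) * (V' s * q * V s ^ (q - 1)) ≤ 0 := by
      intro s hs
      have hw : 0 < V s := hVpos s hs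
      have hwq1 : 0 < V s ^ (q - 1) := Real.rpow_pos_of_pos hw _
      have h1 : V' s ≤ -a * V s ^ p1 - b * V s := hkey s hs.1 (hVgt s hs).le
      have h2 : V' s * q * V s ^ (q - 1) ≤ (-a * V s ^ p1 - b * V s) * q * V s ^ (q - 1) :=
        mul_le_mul_of_nonneg_right (mul_le_mul_of_nonneg_right h1 hqpos.le) hwq1.le
      have h3 : V s ^ p1 * V s ^ (q - 1) = 1 := by
        rw [← Real.rpow_add hw]
        norm_num [hq]
      have h4 : V s * V s ^ (q - 1) = V s ^ q := by
        nth_rewrite 1 [← Real.rpow_one (V s)]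
        rw [← Real.rpow_add hw]
        norm_num
      have h5 : (-a * V s ^ p1 - b * V s) * q * V s ^ (q - 1) = -a * q - b * q * y s := by
        simp only [hy]
        calc (-a * V s ^ p1 - b * V s) * q * V s ^ (q - 1)
            = -(a * q) * (V s ^ p1 * V s ^ (q - 1)) - b * q * (V s * V s ^ (q - 1)) := by ring
          _ = -a * q - b * q * V s ^ q := by rw [h3, h4]; ring
      rw [h5] at h2
      have hexppos : 0 < Real.exp (b * q * s) := Real.exp_pos _
      have h6 : b * q * (y s + a / b) + (V' s * q * V s ^ (q - 1)) ≤ 0 := by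
        have hab : b * q * (y s + a / b) = b * q * y s + a * q := by
          field_simp
        rw [hab]
        linarith [h2]
      calc Real.exp (b * q * s) * (b * q) * (y s + a / b)
            + Real.exp (b * q * s) * (V' s * q * V s ^ (q - 1))
          = Real.exp (b * q * s) * (b * q * (y s + a / b) + (V' s * q * V s ^ (q - 1))) := by
            ring
        _ ≤ 0 := mul_nonpos_of_nonneg_of_nonpos hexppos.le h6
    have hanti : AntitoneOn z (Set.Icc 0 T) := by
      apply antitoneOn_of_deriv_nonpos (convex_Icc 0 T)
      · exact fun s hs => (hzderiv s hs).continuousAt.continuousWithinAt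
      · intro s hs
        rw [interior_Icc] at hs
        exact (hzderiv s (Set.Ioo_subset_Icc_self hs)).differentiableAt.differentiableWithinAt
      · intro s hs
        rw [interior_Icc] at hs
        rw [(hzderiv s (Set.Ioo_subset_Icc_self hs)).deriv]
        exact hzle s (Set.Ioo_subset_Icc_self hs)
    have hzTz0 : z T ≤ z 0 := hanti ⟨le_rfl, hT0⟩ ⟨hT0, le_rfl⟩ hT0
    have hexpT : Real.exp (b * q * T) = 1 + b * y0 / a := by
      rw [hT, mul_div_cancel₀ _ (by positivity : b * q ≠ 0)]
      exact Real.exp_log hargpos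
    have hz0 : z 0 = y0 + a / b := by simp [hz, hy, hy0]
    have hzT : z T = (1 + b * y0 / a) * (y T + a / b) := by
      rw [hz]
      simp only
      rw [hexpT]
    have hyT : 0 < y T := Real.rpow_pos_of_pos (hVpos T ⟨hT0, le_rfl⟩) q
    rw [hzT, hz0] at hzTz0
    have hab2 : b * y0 / a * (a / b) = y0 := by field_simp
    nlinarith [mul_nonneg (by positivity : (0:ℝ) ≤ b * y0 / a) hyT.le]
  -- conclude
  intro t ht
  obtain ⟨s, hs, hVs⟩ := hreach
  have hst : s ≤ t := hs.2.trans ht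
  have hVt : V t ≤ v := barrier_aux V V' v hderiv hneg hs.1 hst hVs
  have h0t : 0 ≤ t := hT0.trans ht
  calc θ1 * V t ^ (p1 - p2) + θ2 * V t ^ (1 - p2) = f (V t) := rfl
    _ ≤ f v := hmono (V t) v (hnonneg t h0t) hVt
    _ = c3 := hfv
end

section
/- Reduction of the residual set (Lemma 2, second part): Let c3 > 0, θ1 > 0, θ2 > 0, p1 ∈ (0,1), p2 ∈ (0,p1), and let θ3 ∈ (0,1) satisfy (θ3·c3/θ1)^{1−p2} = ((1−θ3)·c3/θ2)^{p1−p2}. Then the three sets of nonnegative reals D = {v ≥ 0 : θ1·v^{p1−p2} + θ2·v^{1−p2} < c3}, D1 = {v ≥ 0 : v^{p1−p2} < θ3·c3/θ1} and D2 = {v ≥ 0 : v^{1−p2} < (1−θ3)·c3/θ2} coincide: D = D1 = D2. -/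
/-- **Reduction of the residual set (Lemma 2, second part).**
If `θ3 ∈ (0,1)` satisfies `(θ3*c3/θ1) ^ (1-p2) = ((1-θ3)*c3/θ2) ^ (p1-p2)`,
then the residual set `D` coincides with the two simpler sets `D1` and `D2`. -/
theorem residual_set_reduction
    (c3 θ1 θ2 θ3 p1 p2 : ℝ) (hc3 : 0 < c3) (hθ1 : 0 < θ1) (hθ2 : 0 < θ2)
    (hp1 : p1 ∈ Set.Ioo (0 : ℝ) 1) (hp2 : p2 ∈ Set.Ioo (0 : ℝ) p1)
    (hθ3 : θ3 ∈ Set.Ioo (0 : ℝ) 1)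
    (hsplit : (θ3 * c3 / θ1) ^ (1 - p2) = ((1 - θ3) * c3 / θ2) ^ (p1 - p2)) :
    {v : ℝ | 0 ≤ v ∧ θ1 * v ^ (p1 - p2) + θ2 * v ^ (1 - p2) < c3}
        = {v : ℝ | 0 ≤ v ∧ v ^ (p1 - p2) < θ3 * c3 / θ1} ∧
      {v : ℝ | 0 ≤ v ∧ v ^ (p1 - p2) < θ3 * c3 / θ1}
        = {v : ℝ | 0 ≤ v ∧ v ^ (1 - p2) < (1 - θ3) * c3 / θ2} := by
  obtain ⟨hp1a, hp1b⟩ := hp1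
  obtain ⟨hp2a, hp2b⟩ := hp2
  obtain ⟨hθ3a, hθ3b⟩ := hθ3
  set a : ℝ := p1 - p2 with ha'
  set b : ℝ := 1 - p2 with hb'
  have ha : 0 < a := by simp [ha']; linarith
  have hb : 0 < b := by simp [hb']; linarith
  set A : ℝ := θ3 * c3 / θ1 with hA'
  set B : ℝ := (1 - θ3) * c3 / θ2 with hB'
  have hA : 0 < A := by positivity
  have hB : 0 < B := by
    have : 0 < 1 - θ3 := by linarith
    positivity
  set t : ℝ := A ^ a⁻¹ with ht'
  have hT : 0 < t := Real.rpow_pos_of_pos hA _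
  have hta : t ^ a = A := Real.rpow_inv_rpow hA.le ha.ne'
  have htb : t ^ b = B := by
    have h1 : t ^ b = (A ^ b) ^ a⁻¹ := by
      rw [ht', ← Real.rpow_mul hA.le, ← Real.rpow_mul hA.le, mul_comm]
    rw [h1, hsplit, Real.rpow_rpow_inv hB.le ha.ne']
  have hc : θ1 * t ^ a + θ2 * t ^ b = c3 := by
    rw [hta, htb, hA', hB']
    field_simp
    ring
  -- D1 = D2
  have h12 : ∀ v : ℝ, 0 ≤ v → (v ^ a < A ↔ v ^ b < B) := by
    intro v hv
    rw [← hta, ← htb, Real.rpow_lt_rpow_iff hv hT.le ha,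
      Real.rpow_lt_rpow_iff hv hT.le hb]
  have hD : ∀ v : ℝ, 0 ≤ v → (θ1 * v ^ a + θ2 * v ^ b < c3 ↔ v ^ a < A) := by
    intro v hv
    rw [← hta, Real.rpow_lt_rpow_iff hv hT.le ha, ← hc]
    constructor
    · intro h
      by_contra hle
      push_neg at hle
      have h1 : t ^ a ≤ v ^ a := Real.rpow_le_rpow hT.le hle ha.le
      have h2 : t ^ b ≤ v ^ b := Real.rpow_le_rpow hT.le hle hb.le
      nlinarith
    · intro h
      have h1 : v ^ a < t ^ a := Real.rpow_lt_rpow hv h ha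
      have h2 : v ^ b < t ^ b := Real.rpow_lt_rpow hv h hb
      nlinarith
  constructor <;> ext v <;> simp only [Set.mem_setOf_eq] <;>
    constructor <;> rintro ⟨hv, h⟩ <;> refine ⟨hv, ?_⟩
  · exact (hD v hv).mp h
  · exact (hD v hv).mpr h
  · exact (h12 v hv).mp h
  · exact (h12 v hv).mpr h
end

section
/- Positive definiteness of the Lyapunov matrix P: let k1, k2, k3, k4, m be positive reals with m > 2 and m²·k3·k4 > (m³·k3/(m−1) + (4m²−4m+1)·k1²)·k2². Then the symmetric 3×3 real matrix P = (1/2)·[[2m·k3/(m−1) + k1², k1·k2, −k1], [k1·k2, 2k4 + k2², −k2], [−k1, −k2, 2]] is positive definite. -/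
open Matrix


/-- **Positive definiteness of the Lyapunov matrix `P`** (equation (20)),
under the gain condition (11). -/
theorem lyapunov_matrix_P_posDef
    (k1 k2 k3 k4 m : ℝ)
    (hk1 : 0 < k1) (hk2 : 0 < k2) (hk3 : 0 < k3) (hk4 : 0 < k4)
    (hm : 2 < m)
    (hgain : (m ^ 3 * k3 / (m - 1) + (4 * m ^ 2 - 4 * m + 1) * k1 ^ 2) * k2 ^ 2
        < m ^ 2 * k3 * k4) :
    (((1 : ℝ) / 2) • !![2 * m * k3 / (m - 1) + k1 ^ 2, k1 * k2, -k1;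
        k1 * k2, 2 * k4 + k2 ^ 2, -k2;
        -k1, -k2, 2]).PosDef := by
  have hm1 : (0:ℝ) < m - 1 := by linarith
  rw [Matrix.posDef_iff_dotProduct_mulVec]
  constructor
  · ext i j
    fin_cases i <;> fin_cases j <;>
      simp [Matrix.conjTranspose_apply]
  · intro x hx
    have hqf : x ⬝ᵥ (((1 : ℝ) / 2) • !![2 * m * k3 / (m - 1) + k1 ^ 2, k1 * k2, -k1;
        k1 * k2, 2 * k4 + k2 ^ 2, -k2;
        -k1, -k2, 2]) *ᵥ x
        = (1/2) * (2 * m * k3 / (m-1) * (x 0)^2 + 2 * k4 * (x 1)^2 + (x 2)^2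
            + (k1 * x 0 + k2 * x 1 - x 2)^2) := by
      simp [dotProduct, Matrix.mulVec, Fin.sum_univ_three]
      ring
    simp only [star_trivial, hqf]
    have hx' : x 0 ≠ 0 ∨ x 1 ≠ 0 ∨ x 2 ≠ 0 := by
      by_contra h
      push_neg at h
      apply hx
      ext i
      fin_cases i <;> simp [h.1, h.2.1, h.2.2]
    have h0 : 0 < 2 * m * k3 / (m-1) := by positivity
    rcases hx' with h | h | h
    · nlinarith [sq_nonneg (x 1), sq_nonneg (x 2), sq_nonneg (k1 * x 0 + k2 * x 1 - x 2),
        mul_pos h0 (sq_pos_of_ne_zero h)]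
    · nlinarith [sq_nonneg (x 0), sq_nonneg (x 2), sq_nonneg (k1 * x 0 + k2 * x 1 - x 2),
        mul_pos hk4 (sq_pos_of_ne_zero h), mul_nonneg h0.le (sq_nonneg (x 0))]
    · nlinarith [sq_nonneg (x 0), sq_nonneg (x 1), sq_nonneg (k1 * x 0 + k2 * x 1 - x 2),
        sq_pos_of_ne_zero h, mul_nonneg h0.le (sq_nonneg (x 0))]
end

section
/- Positive definiteness of the matrix Ω̃1: let k1, k2, k3, k4, m be positive reals with m > 2 and m²·k3·k4 > (m³·k3/(m−1) + (4m²−4m+1)·k1²)·k2². Then the symmetric 3×3 real matrix Ω̃1 = (k1/m)·[[k3·m + k1²·(m−1), 0, −k1·(m−1)], [0, k4·m + k2²·(3m−1), −k2·(2m−1)], [−k1·(m−1), −k2·(2m−1), m−1]] is positive definite. -/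
/-- **Positive definiteness of the matrix `Ω̃₁`** (equation (28), first matrix),
under the gain condition (11). -/
theorem omega1_tilde_posDef
    (k1 k2 k3 k4 m : ℝ)
    (hk1 : 0 < k1) (hk2 : 0 < k2) (hk3 : 0 < k3) (hk4 : 0 < k4)
    (hm : 2 < m)
    (hgain : (m ^ 3 * k3 / (m - 1) + (4 * m ^ 2 - 4 * m + 1) * k1 ^ 2) * k2 ^ 2
        < m ^ 2 * k3 * k4) :
    ((k1 / m) • !![k3 * m + k1 ^ 2 * (m - 1), 0, -(k1 * (m - 1));
        0, k4 * m + k2 ^ 2 * (3 * m - 1), -(k2 * (2 * m - 1));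
        -(k1 * (m - 1)), -(k2 * (2 * m - 1)), m - 1]).PosDef := by
  have hm1 : (0:ℝ) < m - 1 := by linarith
  have hmpos : (0:ℝ) < m := by linarith
  have hkm : 0 < k1 / m := div_pos hk1 hmpos
  have hgain' : m ^ 3 * k3 * k2 ^ 2 + (4 * m ^ 2 - 4 * m + 1) * k1 ^ 2 * k2 ^ 2 * (m - 1)
      < m ^ 2 * k3 * k4 * (m - 1) := by
    have h := mul_lt_mul_of_pos_right hgain hm1
    have hne : m - 1 ≠ 0 := ne_of_gt hm1
    field_simp at h
    nlinarith [h]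
  have hQ : ∀ a b c : ℝ, (a ≠ 0 ∨ b ≠ 0 ∨ c ≠ 0) →
      0 < (k1 / m) * ((k3 * m + k1 ^ 2 * (m - 1)) * a ^ 2
        + (k4 * m + k2 ^ 2 * (3 * m - 1)) * b ^ 2 + (m - 1) * c ^ 2
        - 2 * (k1 * (m - 1)) * a * c - 2 * (k2 * (2 * m - 1)) * b * c) := by
    intro a b c habc
    set A := k3 * m + k1 ^ 2 * (m - 1) with hA
    set B := k4 * m + k2 ^ 2 * (3 * m - 1) with hB
    have hApos : 0 < A := by nlinarith
    have hBpos : 0 < B := by nlinarith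
    set p := k1 * (m - 1) with hp
    set q := k2 * (2 * m - 1) with hq
    have hΔ : 0 < A * B * (m - 1) - B * p ^ 2 - A * q ^ 2 := by
      have e : A * B * (m - 1) - B * p ^ 2 - A * q ^ 2
          = m ^ 2 * k3 * k4 * (m - 1) - m ^ 3 * k3 * k2 ^ 2
            - (4 * m ^ 2 - 4 * m + 1) * k1 ^ 2 * k2 ^ 2 * (m - 1) := by
        simp only [hA, hB, hp, hq]; ring
      rw [e]; linarith [hgain']
    set Q := A * a ^ 2 + B * b ^ 2 + (m - 1) * c ^ 2 - 2 * p * a * c - 2 * q * b * c with hQdef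
    have hid : A * B * Q = B * (A * a - p * c) ^ 2 + A * (B * b - q * c) ^ 2
        + (A * B * (m - 1) - B * p ^ 2 - A * q ^ 2) * c ^ 2 := by
      simp only [hQdef]; ring
    have hQpos : 0 < Q := by
      rcases eq_or_ne c 0 with hc | hc
      · have e0 : Q = A * a ^ 2 + B * b ^ 2 := by rw [hQdef, hc]; ring
        rw [e0]
        rcases habc with ha | hb | h0
        · have t1 := mul_pos hApos (sq_pos_of_ne_zero ha)
          have t2 := mul_nonneg hBpos.le (sq_nonneg b)
          linarith
        · have t1 := mul_nonneg hApos.le (sq_nonneg a)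
          have t2 := mul_pos hBpos (sq_pos_of_ne_zero hb)
          linarith
        · exact absurd hc h0
      · have h1 : 0 < A * B * Q := by
          rw [hid]
          have t0 := mul_pos hΔ (sq_pos_of_ne_zero hc)
          have t1 := mul_nonneg hBpos.le (sq_nonneg (A * a - p * c))
          have t2 := mul_nonneg hApos.le (sq_nonneg (B * b - q * c))
          linarith
        have hAB := mul_pos hApos hBpos
        by_contra hle
        push_neg at hle
        have : A * B * Q ≤ 0 := mul_nonpos_of_nonneg_of_nonpos hAB.le hle
        linarith
    exact mul_pos hkm hQpos
  refine Matrix.PosDef.of_dotProduct_mulVec_pos ?_ ?_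
  · ext i j
    fin_cases i <;> fin_cases j <;>
      simp [Matrix.conjTranspose_apply, Matrix.smul_apply]
  · intro x hx
    have hne : x 0 ≠ 0 ∨ x 1 ≠ 0 ∨ x 2 ≠ 0 := by
      by_contra h
      push_neg at h
      apply hx
      ext i
      fin_cases i <;> simp [h.1, h.2.1, h.2.2]
    have key := hQ (x 0) (x 1) (x 2) hne
    have e : dotProduct (star x) (((k1 / m) • !![k3 * m + k1 ^ 2 * (m - 1), 0, -(k1 * (m - 1));
        0, k4 * m + k2 ^ 2 * (3 * m - 1), -(k2 * (2 * m - 1));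
        -(k1 * (m - 1)), -(k2 * (2 * m - 1)), m - 1]).mulVec x)
      = (k1 / m) * ((k3 * m + k1 ^ 2 * (m - 1)) * (x 0) ^ 2
        + (k4 * m + k2 ^ 2 * (3 * m - 1)) * (x 1) ^ 2 + (m - 1) * (x 2) ^ 2
        - 2 * (k1 * (m - 1)) * (x 0) * (x 2) - 2 * (k2 * (2 * m - 1)) * (x 1) * (x 2)) := by
      simp [Matrix.mulVec, dotProduct, Fin.sum_univ_three, Matrix.smul_apply]
      ring
    rw [e]
    exact key
end
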